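/- (Example 3, the braided theta) The pure braid b := (σ_2^{−1} σ_1^{−1} σ_3^{−1} σ_2^{−1} σ_4 σ_3 σ_5 σ_4)^3 in B_6 is topologically trivial, i.e., b lies in the subgroup R_6 of B_6 generated by the full twist d and the flips r_1, …, r_6. -/

import Mathlib

/-!
The braid `b` equals `r₆ r₅ r₂ r₁ r₄ r₃ d⁻²` in `B_6`. This identity is certified by Dehornoy's
handle reduction: a handle `σ_i^e u σ_i^{-e}`, where `u` only involves `σ_j` with `j > i`, equals
the word obtained from `u` by replacing each `σ_{i+1}^{d}` with `σ_{i+1}^{-e} σ_i^{d} σ_{i+1}^{e}`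
(a consequence of the braid relation), and repeatedly reducing handles turns the word of
`b (r₆ r₅ r₂ r₁ r₄ r₃ d⁻²)⁻¹` into the empty word.
-/

namespace Braid

/-- Braid relations on generators indexed by `Fin m`; the generator `i : Fin m` stands for the
Artin generator `σ_{i+1}` of the braid group on `m+1` strands: the relations are
`σ_i σ_j = σ_j σ_i` for `|i-j| ≥ 2` and `σ_i σ_{i+1} σ_i = σ_{i+1} σ_i σ_{i+1}`. -/
def braidRels (m : ℕ) : Set (FreeGroup (Fin m)) :=
  {r | ∃ i j : Fin m, i.val + 2 ≤ j.val ∧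
      r = .of i * .of j * (.of j * .of i)⁻¹} ∪
  {r | ∃ (i : Fin m) (hij : i.val + 1 < m),
      r = .of i * .of ⟨i.val + 1, hij⟩ * .of i *
        (.of ⟨i.val + 1, hij⟩ * .of i * .of ⟨i.val + 1, hij⟩)⁻¹}

/-- The Artin braid group `B_n` on `n` strands, presented with generators `σ_1, …, σ_{n-1}`
and the braid relations. -/
def BraidGroup (n : ℕ) : Type := PresentedGroup (braidRels (n - 1))

instance (n : ℕ) : Group (BraidGroup n) := by unfold BraidGroup; infer_instance

/-- The Artin generator `σ_i` of `B_n`, for `1 ≤ i ≤ n-1` (junk value `1` otherwise). -/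
def σ (n : ℕ) (i : ℕ) : BraidGroup n :=
  if h : 1 ≤ i ∧ i ≤ n - 1 then PresentedGroup.of ⟨i - 1, by omega⟩ else 1

/-- The ascending product `σ_a σ_{a+1} ⋯ σ_b` (empty product if `b < a`). -/
def up (n a b : ℕ) : BraidGroup n := ((List.range' a (b + 1 - a)).map (σ n)).prod

/-- The descending product `σ_a σ_{a-1} ⋯ σ_b` (empty product if `a < b`). -/
def down (n a b : ℕ) : BraidGroup n :=
  ((List.range' b (a + 1 - b)).reverse.map (σ n)).prod

/-- The full twist `d = (σ_{n-1} ⋯ σ_2 σ_1)^n` of `B_n`. -/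
def fullTwist (n : ℕ) : BraidGroup n := (down n (n - 1) 1) ^ n

/-- The flip `r_i = σ_{i-1} ⋯ σ_2 σ_1^2 σ_2 ⋯ σ_{n-2} σ_{n-1}^2 σ_{n-2} ⋯ σ_i` of `B_n`
(for `1 ≤ i ≤ n`), written as `(σ_{i-1} ⋯ σ_1) (σ_1 ⋯ σ_{n-1}) (σ_{n-1} ⋯ σ_i)`. -/
def flip (n i : ℕ) : BraidGroup n :=
  down n (i - 1) 1 * up n 1 (n - 1) * down n (n - 1) i

/-- The descending product of flips `r_a r_{a-1} ⋯ r_b` (empty product if `a < b`). -/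
def flipsDown (n a b : ℕ) : BraidGroup n :=
  ((List.range' b (a + 1 - b)).reverse.map (flip n)).prod

/-- The subgroup `R_n ⊆ B_n` generated by the full twist `d` and the flips `r_1, …, r_n`. -/
def R (n : ℕ) : Subgroup (BraidGroup n) :=
  Subgroup.closure ({fullTwist n} ∪ flip n '' Set.Icc 1 n)

/-- The subgroup `R_n' ⊆ B_n` generated by the flips `r_1, …, r_n`. -/
def R' (n : ℕ) : Subgroup (BraidGroup n) :=
  Subgroup.closure (flip n '' Set.Icc 1 n)

private lemma swap_braid {n : ℕ} (a b c : Fin n) (hab : a ≠ b) (hbc : b ≠ c) (hac : a ≠ c) :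
    Equiv.swap a b * Equiv.swap b c * Equiv.swap a b
      = Equiv.swap b c * Equiv.swap a b * Equiv.swap b c := by
  have h1 : Equiv.swap b a * Equiv.swap c b * Equiv.swap b a = Equiv.swap a c :=
    Equiv.swap_mul_swap_mul_swap (Ne.symm hbc) hac.symm
  have h2 : Equiv.swap b c * Equiv.swap a b * Equiv.swap b c = Equiv.swap c a :=
    Equiv.swap_mul_swap_mul_swap hab hac
  rw [h2, Equiv.swap_comm a b, Equiv.swap_comm b c, h1, Equiv.swap_comm a c]

private lemma swap_commute {n : ℕ} (a b c d : Fin n)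
    (hac : a ≠ c) (had : a ≠ d) (hbc : b ≠ c) (hbd : b ≠ d) :
    Equiv.swap a b * Equiv.swap c d = Equiv.swap c d * Equiv.swap a b := by
  refine Equiv.Perm.Disjoint.commute ?_
  intro x
  by_cases h1 : x = a
  · subst h1; right; exact Equiv.swap_apply_of_ne_of_ne hac had
  · by_cases h2 : x = b
    · subst h2; right; exact Equiv.swap_apply_of_ne_of_ne hbc hbd
    · left; exact Equiv.swap_apply_of_ne_of_ne h1 h2

/-- The transposition `(i, i+1)` of `Fin n` associated to the generator `i : Fin (n-1)`. -/
def permGen (n : ℕ) (i : Fin (n - 1)) : Equiv.Perm (Fin n) :=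
  Equiv.swap ⟨i.val, by have := i.isLt; omega⟩ ⟨i.val + 1, by have := i.isLt; omega⟩

/-- The homomorphism `B_n → Sym(n)` sending `σ_i` to the transposition `(i, i+1)`. -/
def toPerm (n : ℕ) : BraidGroup n →* Equiv.Perm (Fin n) :=
  PresentedGroup.toGroup (f := permGen n)
    (by
      rintro r (⟨i, j, hij, rfl⟩ | ⟨i, hij, rfl⟩) <;>
        simp only [map_mul, map_inv, FreeGroup.lift_apply_of, permGen] <;> rw [mul_inv_eq_one]
      · refine swap_commute _ _ _ _ ?_ ?_ ?_ ?_ <;>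
          · rw [ne_eq, Fin.mk.injEq]; omega
      · refine swap_braid _ _ _ ?_ ?_ ?_ <;>
          · rw [ne_eq, Fin.mk.injEq]; omega)

/-- The pure braid group `P_n`: the kernel of `B_n → Sym(n)`, `σ_i ↦ (i, i+1)`. -/
def P (n : ℕ) : Subgroup (BraidGroup n) := (toPerm n).ker

private lemma mk_rel_eq_one {m : ℕ} {r : FreeGroup (Fin m)} (h : r ∈ braidRels m) :
    PresentedGroup.mk (braidRels m) r = 1 :=
  (QuotientGroup.eq_one_iff _).mpr (Subgroup.subset_normalClosure h)

lemma σ_comm {n i j : ℕ} (h1 : 1 ≤ i) (h2 : i + 2 ≤ j) (h3 : j ≤ n - 1) :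
    σ n i * σ n j = σ n j * σ n i := by
  rw [show σ n i = (PresentedGroup.of (⟨i - 1, by omega⟩ : Fin (n - 1)) : BraidGroup n) from
      dif_pos ⟨h1, by omega⟩,
    show σ n j = (PresentedGroup.of (⟨j - 1, by omega⟩ : Fin (n - 1)) : BraidGroup n) from
      dif_pos ⟨by omega, h3⟩]
  have hmem : (FreeGroup.of (⟨i - 1, by omega⟩ : Fin (n-1)) * .of ⟨j - 1, by omega⟩ *
      (.of ⟨j - 1, by omega⟩ * .of ⟨i - 1, by omega⟩)⁻¹) ∈ braidRels (n - 1) :=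
    Or.inl ⟨⟨i - 1, by omega⟩, ⟨j - 1, by omega⟩, by show i - 1 + 2 ≤ j - 1; omega, rfl⟩
  have h := mk_rel_eq_one hmem
  rw [map_mul, map_inv, mul_inv_eq_one, map_mul, map_mul] at h
  exact h

set_option maxHeartbeats 1600000 in
lemma σ_braid {n i : ℕ} (h1 : 1 ≤ i) (h2 : i + 1 ≤ n - 1) :
    σ n i * σ n (i + 1) * σ n i = σ n (i + 1) * σ n i * σ n (i + 1) := by
  rw [show σ n i = (PresentedGroup.of (⟨i - 1, by omega⟩ : Fin (n - 1)) : BraidGroup n) from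
      dif_pos ⟨h1, by omega⟩,
    show σ n (i + 1) = (PresentedGroup.of (⟨i + 1 - 1, by omega⟩ : Fin (n - 1)) : BraidGroup n)
      from dif_pos ⟨by omega, h2⟩]
  have key : (⟨i + 1 - 1, by omega⟩ : Fin (n - 1)) = ⟨(i - 1) + 1, by omega⟩ := by
    rw [Fin.mk.injEq]; omega
  rw [key]
  have hmem : (FreeGroup.of (⟨i - 1, by omega⟩ : Fin (n-1)) * .of ⟨(i-1) + 1, by omega⟩ *
      .of ⟨i - 1, by omega⟩ *
      (.of ⟨(i-1) + 1, by omega⟩ * .of ⟨i - 1, by omega⟩ * .of ⟨(i-1)+1, by omega⟩)⁻¹)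
      ∈ braidRels (n - 1) :=
    Or.inr ⟨⟨i - 1, by omega⟩, by show i - 1 + 1 < n - 1; omega, rfl⟩
  have h := mk_rel_eq_one hmem
  rw [map_mul, map_inv, mul_inv_eq_one, map_mul, map_mul, map_mul, map_mul] at h
  exact h

/-- The canonical homomorphism `ι : B_{n-1} → B_n` determined by `σ_i ↦ σ_i`. -/
def ι (n : ℕ) : BraidGroup (n - 1) →* BraidGroup n :=
  PresentedGroup.toGroup (f := fun i : Fin (n - 1 - 1) => σ n (i.val + 1))
    (by
      rintro r (⟨i, j, hij, rfl⟩ | ⟨i, hij, rfl⟩) <;>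
        simp only [map_mul, map_inv, FreeGroup.lift_apply_of] <;> rw [mul_inv_eq_one]
      · exact σ_comm (by omega) (by omega) (by have := j.isLt; omega)
      · exact σ_braid (by omega) (by have := i.isLt; omega))


section BraidRelation

variable {G : Type*} [Group G] {a b : G}

lemma mul_mul_inv_eq_of_braid (h : a * b * a = b * a * b) : a * b * a⁻¹ = b⁻¹ * a * b :=
  calc a * b * a⁻¹ = b⁻¹ * (b * a * b) * a⁻¹ := by group
    _ = b⁻¹ * a * b := by rw [← h]; group

lemma inv_mul_mul_eq_of_braid (h : a * b * a = b * a * b) : a⁻¹ * b * a = b * a * b⁻¹ :=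
  calc a⁻¹ * b * a = a⁻¹ * (b * a * b) * b⁻¹ := by group
    _ = b * a * b⁻¹ := by rw [← h]; group

end BraidRelation

section HandleReduction

variable {m : ℕ}

def wordVal (w : List (Fin m × Bool)) : PresentedGroup (braidRels m) :=
  PresentedGroup.mk _ (FreeGroup.mk w)

lemma wordVal_nil : wordVal ([] : List (Fin m × Bool)) = 1 := rfl

lemma wordVal_append (u v : List (Fin m × Bool)) : wordVal (u ++ v) = wordVal u * wordVal v := by
  rw [wordVal, wordVal, wordVal, ← FreeGroup.mul_mk, map_mul]

lemma wordVal_cons (x : Fin m × Bool) (w : List (Fin m × Bool)) :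
    wordVal (x :: w) = wordVal [x] * wordVal w :=
  wordVal_append [x] w

lemma wordVal_invRev (w : List (Fin m × Bool)) :
    wordVal (FreeGroup.invRev w) = (wordVal w)⁻¹ := by
  rw [wordVal, wordVal, ← FreeGroup.inv_mk, map_inv]

lemma wordVal_singleton (i : Fin m) (e : Bool) :
    wordVal [(i, e)] = if e then PresentedGroup.of i else (PresentedGroup.of i)⁻¹ := by
  cases e
  · exact wordVal_invRev [(i, true)]
  · rfl

lemma of_commute {i k : Fin m} (h : i.val + 2 ≤ k.val) :
    Commute (PresentedGroup.of i : PresentedGroup (braidRels m)) (PresentedGroup.of k) := by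
  have hrel : PresentedGroup.mk (braidRels m) (.of i * .of k * (.of k * .of i)⁻¹) = 1 :=
    PresentedGroup.one_of_mem (Or.inl ⟨i, k, h, rfl⟩)
  rwa [map_mul, map_inv, mul_inv_eq_one, map_mul, map_mul] at hrel

lemma of_braid {i k : Fin m} (h : k.val = i.val + 1) :
    (PresentedGroup.of i * PresentedGroup.of k * PresentedGroup.of i : PresentedGroup (braidRels m))
      = PresentedGroup.of k * PresentedGroup.of i * PresentedGroup.of k := by
  obtain ⟨k, hk⟩ := k
  subst h
  have hrel : PresentedGroup.mk (braidRels m)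
      (.of i * .of ⟨i + 1, hk⟩ * .of i * (.of ⟨i + 1, hk⟩ * .of i * .of ⟨i + 1, hk⟩)⁻¹) = 1 :=
    PresentedGroup.one_of_mem (Or.inr ⟨i, hk, rfl⟩)
  rwa [map_mul, map_inv, mul_inv_eq_one, map_mul, map_mul, map_mul, map_mul] at hrel

/-- The image of the letter `z` under conjugation by the letter `y`, when `z` has larger index. -/
def conjLetter (y z : Fin m × Bool) : List (Fin m × Bool) :=
  if z.1.val = y.1.val + 1 then [(z.1, !y.2), (y.1, z.2), (z.1, y.2)] else [z]

lemma wordVal_conjLetter {y z : Fin m × Bool} (h : y.1 < z.1) :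
    wordVal [y] * wordVal [z] * wordVal [(y.1, !y.2)] = wordVal (conjLetter y z) := by
  obtain ⟨i, e⟩ := y
  obtain ⟨k, d⟩ := z
  dsimp only [conjLetter] at h ⊢
  split_ifs with hk
  · have h1 := mul_mul_inv_eq_of_braid (of_braid hk)
    have h2 := inv_mul_mul_eq_of_braid (of_braid hk)
    rw [show [(k, !e), (i, d), (k, e)] = [(k, !e)] ++ [(i, d)] ++ [(k, e)] from rfl,
      wordVal_append, wordVal_append]
    cases e <;> cases d <;> simp only [wordVal_singleton, Bool.not_true, Bool.not_false,
      ite_true, Bool.false_eq_true, ite_false]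
    · simpa [mul_assoc] using congrArg (·⁻¹) h2
    · simpa [mul_assoc] using h2
    · simpa [mul_assoc] using congrArg (·⁻¹) h1
    · simpa [mul_assoc] using h1
  · have hc : Commute (wordVal [(i, e)]) (wordVal [(k, d)]) := by
      have := of_commute (show i.val + 2 ≤ k.val by rw [Fin.lt_def] at h; omega)
      cases e <;> cases d <;> simp [wordVal_singleton, this]
    rw [hc.eq, mul_assoc, show [(i, !e)] = FreeGroup.invRev [(i, e)] from rfl, wordVal_invRev,
      mul_inv_cancel, mul_one]

lemma wordVal_flatMap_conjLetter (y : Fin m × Bool) :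
    ∀ u : List (Fin m × Bool), (∀ z ∈ u, y.1 < z.1) →
      wordVal [y] * wordVal u * wordVal [(y.1, !y.2)] = wordVal (u.flatMap (conjLetter y))
  | [], _ => by
    rw [wordVal_nil, mul_one, show [(y.1, !y.2)] = FreeGroup.invRev [y] from rfl, wordVal_invRev,
      mul_inv_cancel, List.flatMap_nil, wordVal_nil]
  | z :: u, hu => by
    have hy : wordVal [(y.1, !y.2)] * wordVal [y] = 1 := by
      rw [show [(y.1, !y.2)] = FreeGroup.invRev [y] from rfl, wordVal_invRev, inv_mul_cancel]
    rw [List.flatMap_cons, wordVal_append, ← wordVal_conjLetter (hu z (List.mem_cons_self ..)),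
      ← wordVal_flatMap_conjLetter y u (fun z hz => hu z (List.mem_cons_of_mem _ hz)),
      wordVal_cons z u]
    calc wordVal [y] * (wordVal [z] * wordVal u) * wordVal [(y.1, !y.2)]
        = wordVal [y] * wordVal [z] * (wordVal [(y.1, !y.2)] * wordVal [y]) * wordVal u *
          wordVal [(y.1, !y.2)] := by rw [hy]; group
      _ = _ := by group

/-- Reduces the handle of `pre.reverse ++ w` that ends first, searching it in `w`. The handle
ending at a letter `x` can only start at the nearest earlier letter of index at most that of `x`. -/
def handleStep : List (Fin m × Bool) → List (Fin m × Bool) → Option (List (Fin m × Bool))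
  | _, [] => none
  | pre, x :: rest =>
    match pre.dropWhile (fun z => x.1 < z.1) with
    | y :: outer =>
      if y = (x.1, !x.2) then
        some (outer.reverse ++ (pre.takeWhile (fun z => x.1 < z.1)).reverse.flatMap (conjLetter y)
          ++ rest)
      else handleStep (x :: pre) rest
    | [] => handleStep (x :: pre) rest

lemma wordVal_of_handleStep_eq_some :
    ∀ (pre w w' : List (Fin m × Bool)), handleStep pre w = some w' →
      wordVal w' = wordVal (pre.reverse ++ w)
  | _, [], _, h => by simp [handleStep] at h
  | pre, x :: rest, w', h => by
    have hrec (h : handleStep (x :: pre) rest = some w') :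
        wordVal w' = wordVal (pre.reverse ++ x :: rest) := by
      rw [wordVal_of_handleStep_eq_some (x :: pre) rest w' h, List.reverse_cons,
        List.append_assoc, List.singleton_append]
    simp only [handleStep] at h
    split at h
    · next y outer hdrop =>
      split_ifs at h with hyx
      · subst hyx
        obtain rfl := Option.some.inj h
        set inner := pre.takeWhile (fun z => x.1 < z.1) with hinner
        have hpre : pre = inner ++ (x.1, !x.2) :: outer := by
          rw [← hdrop, hinner, List.takeWhile_append_dropWhile]
        have hhandle := wordVal_flatMap_conjLetter (x.1, !x.2) inner.reverse fun z hz =>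
          by simpa using List.mem_takeWhile_imp (List.mem_reverse.mp hz)
        dsimp only at hhandle
        rw [Bool.not_not, Prod.mk.eta] at hhandle
        rw [wordVal_append, wordVal_append, ← hhandle, hpre]
        simp only [List.reverse_append, List.reverse_cons, List.append_assoc, wordVal_append,
          wordVal_cons x rest]
        group
      · exact hrec h
    · exact hrec h

def handleReduce : ℕ → List (Fin m × Bool) → List (Fin m × Bool)
  | 0, w => w
  | k + 1, w =>
    match handleStep [] w with
    | some w' => handleReduce k w'
    | none => w

lemma wordVal_handleReduce : ∀ (k : ℕ) (w : List (Fin m × Bool)),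
    wordVal (handleReduce k w) = wordVal w
  | 0, _ => rfl
  | k + 1, w => by
    unfold handleReduce
    split
    · next w' h => rw [wordVal_handleReduce k w', wordVal_of_handleStep_eq_some [] w w' h]; rfl
    · rfl

lemma wordVal_eq_of_handleReduce_eq_nil {u v : List (Fin m × Bool)} {k : ℕ}
    (h : handleReduce k (u ++ FreeGroup.invRev v) = []) : wordVal u = wordVal v := by
  rw [← mul_inv_eq_one, ← wordVal_invRev, ← wordVal_append, ← wordVal_handleReduce k, h,
    wordVal_nil]

end HandleReduction

lemma fullTwist_mem_R (n : ℕ) : fullTwist n ∈ R n :=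
  Subgroup.subset_closure (Or.inl rfl)

lemma flip_mem_R {n i : ℕ} (hi : i ∈ Set.Icc 1 n) : flip n i ∈ R n :=
  Subgroup.subset_closure (Or.inr ⟨i, hi, rfl⟩)

section SixStrands

/-- Reads `±k` as the letter `σ_k^{±1}` of `B_6`; the generator `σ_k` is `k - 1 : Fin 5`. -/
def letters6 (l : List ℤ) : List (Fin 5 × Bool) :=
  l.map fun z => (Fin.ofNat 5 (z.natAbs - 1), decide (0 < z))

def thetaWord : List (Fin 5 × Bool) :=
  (List.replicate 3 (letters6 [-2, -1, -3, -2, 4, 3, 5, 4])).flatten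

def flipWord (i : ℕ) : List (Fin 5 × Bool) :=
  letters6 (((List.range' 1 (i - 1)).reverse ++ List.range' 1 5 ++
    (List.range' i (6 - i)).reverse).map (↑))

def twistWord : List (Fin 5 × Bool) :=
  (List.replicate 6 (letters6 [5, 4, 3, 2, 1])).flatten

/-- Both sides unfold definitionally to the values of the words below; 320 handle reductions
empty the comparison word. -/
lemma braided_theta_eq :
    ((σ 6 2)⁻¹ * (σ 6 1)⁻¹ * (σ 6 3)⁻¹ * (σ 6 2)⁻¹ * σ 6 4 * σ 6 3 * σ 6 5 * σ 6 4) ^ 3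
      = flip 6 6 * flip 6 5 * flip 6 2 * flip 6 1 * flip 6 4 * flip 6 3 * (fullTwist 6 ^ 2)⁻¹ :=
  wordVal_eq_of_handleReduce_eq_nil (k := 320) (u := thetaWord)
    (v := flipWord 6 ++ flipWord 5 ++ flipWord 2 ++ flipWord 1 ++ flipWord 4 ++ flipWord 3 ++
      FreeGroup.invRev (twistWord ++ twistWord)) (by decide)

end SixStrands

/-- Example 3 (the braided theta): the pure braid
`b = (σ_2⁻¹ σ_1⁻¹ σ_3⁻¹ σ_2⁻¹ σ_4 σ_3 σ_5 σ_4)^3 ∈ B_6` is topologically trivial,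
i.e. `b ∈ R_6`. -/
theorem braided_theta_topologically_trivial :
    ((σ 6 2)⁻¹ * (σ 6 1)⁻¹ * (σ 6 3)⁻¹ * (σ 6 2)⁻¹ * σ 6 4 * σ 6 3 * σ 6 5 * σ 6 4) ^ 3
      ∈ R 6 := by
  rw [braided_theta_eq]
  refine mul_mem (mul_mem (mul_mem (mul_mem (mul_mem (mul_mem ?_ ?_) ?_) ?_) ?_) ?_)
    (inv_mem (pow_mem (fullTwist_mem_R 6) 2)) <;> exact flip_mem_R ⟨by norm_num, by norm_num⟩

end Braid
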